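/- Let v, w ∈ ℝ² be linearly independent with det(v, w) = 1, let K₁ ⊆ ℝ² be a compact convex set with 0, v, w ∈ K₁ and K₁ ⊆ conv{0, v, w, v + w}, and let K := K₁ ∪ K₂ ∪ (−K₁) ∪ (−K₂), where K₂ := {α · z_λ : λ ∈ [0,1], 0 ≤ α ≤ 1/s(λ)}, z_λ := (1−λ)·w − λ·v, and s(λ) := sup_{x ∈ K₁} |det(x, z_λ)|. Then for every λ ∈ [0,1], sup_{x ∈ K} |det(x, z_λ)| = sup_{x ∈ K₁} |det(x, z_λ)| = s(λ); and for every θ ∈ [0,1], writing u_θ := (1−θ)·w + θ·v, sup_{y ∈ K} |det(y, u_θ)| = sup_{y ∈ K₂} |det(y, u_θ)|. -/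

import Mathlib

/-!
In coordinates `x = a • v + b • w` (with `a, b ∈ [0, 1]` on the parallelogram containing `K₁`)
one has `det2 x (z l) = a (1 - l) + b l` and `det2 x (u θ) = a (1 - θ) - b θ`. Since `v, w ∈ K₁`
this gives `max l (1 - l) ≤ s l ≤ 1`. For the first claim, a point `α • z μ` of `K₂` has
`|det2 (α • z μ) (z l)| = α |l - μ| ≤ |l - μ| / s μ ≤ s l`, because
`|l - μ| ≤ max l (1 - l) * max μ (1 - μ)`. For the second, `K₂` contains `w = z 0` and `-v = z 1`,
which realise the bound `max θ (1 - θ)` valid on `K₁`. The reflections `-K₁`, `-K₂` change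
nothing since `|det2 x y|` is even in `x`.
-/

def det2 (x y : ℝ × ℝ) : ℝ := x.1 * y.2 - x.2 * y.1

open Set

lemma det2_smul_add_smul (a b c d : ℝ) (v w : ℝ × ℝ) :
    det2 (a • v + b • w) (c • v + d • w) = (a * d - b * c) * det2 v w := by
  simp only [det2, Prod.fst_add, Prod.snd_add, Prod.smul_fst, Prod.smul_snd, smul_eq_mul]
  ring

lemma det2_neg_left (x y : ℝ × ℝ) : det2 (-x) y = -det2 x y := by
  simp only [det2, Prod.fst_neg, Prod.snd_neg]
  ring

lemma det2_smul_left (a : ℝ) (x y : ℝ × ℝ) : det2 (a • x) y = a * det2 x y := by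
  simp only [det2, Prod.smul_fst, Prod.smul_snd, smul_eq_mul]
  ring

lemma exists_eq_smul_add_smul_of_mem_convexHull {v w x : ℝ × ℝ}
    (hx : x ∈ convexHull ℝ {0, v, w, v + w}) :
    ∃ a ∈ Icc (0 : ℝ) 1, ∃ b ∈ Icc (0 : ℝ) 1, x = a • v + b • w := by
  let f : ℝ × ℝ →ₗ[ℝ] ℝ × ℝ := (LinearMap.fst ℝ ℝ ℝ).smulRight v + (LinearMap.snd ℝ ℝ ℝ).smulRight w
  have hconv : Convex ℝ (f '' (Icc 0 1 ×ˢ Icc 0 1)) :=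
    ((convex_Icc 0 1).prod (convex_Icc 0 1)).linear_image f
  have hsub : {0, v, w, v + w} ⊆ f '' (Icc 0 1 ×ˢ Icc 0 1) := by
    rintro p (rfl | rfl | rfl | rfl)
    · exact ⟨(0, 0), by simp [f]⟩
    · exact ⟨(1, 0), by simp [f]⟩
    · exact ⟨(0, 1), by simp [f]⟩
    · exact ⟨(1, 1), by simp [f]⟩
  obtain ⟨⟨a, b⟩, ⟨ha, hb⟩, rfl⟩ := convexHull_min hsub hconv hx
  exact ⟨a, ha, b, hb, rfl⟩

lemma csSup_image_eq_of_subset {α β : Type*} [ConditionallyCompleteLattice β] {f : α → β}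
    {A B : Set α} (hAB : A ⊆ B) (hA : A.Nonempty) (hB : ∀ x ∈ B, f x ≤ sSup (f '' A)) :
    sSup (f '' B) = sSup (f '' A) := by
  have hbdd : BddAbove (f '' B) := ⟨_, forall_mem_image.2 hB⟩
  exact le_antisymm (csSup_le (hA.mono hAB |>.image f) (forall_mem_image.2 hB))
    (csSup_le_csSup hbdd (hA.image f) (image_mono hAB))

lemma abs_det2_le_of_mem_union_neg {A B : Set (ℝ × ℝ)} {y : ℝ × ℝ} {M : ℝ}
    (hA : ∀ x ∈ A, |det2 x y| ≤ M) (hB : ∀ x ∈ B, |det2 x y| ≤ M) :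
    ∀ x ∈ A ∪ B ∪ -A ∪ -B, |det2 x y| ≤ M := by
  have hneg : ∀ x, |det2 x y| = |det2 (-x) y| := fun x => by rw [det2_neg_left, abs_neg]
  rintro x (((hx | hx) | hx) | hx)
  · exact hA x hx
  · exact hB x hx
  · rw [hneg]; exact hA _ hx
  · rw [hneg]; exact hB _ hx

lemma abs_sub_le_mul_of_le {l μ a b : ℝ} (hl : l ∈ Icc (0 : ℝ) 1) (hμ : μ ∈ Icc (0 : ℝ) 1)
    (ha : 1 - μ ≤ a) (ha' : μ ≤ a) (hb : 1 - l ≤ b) (hb' : l ≤ b) : |l - μ| ≤ a * b := by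
  obtain ⟨hl0, hl1⟩ := hl
  obtain ⟨hμ0, hμ1⟩ := hμ
  rw [abs_le]
  constructor <;> nlinarith

section RadonBody

variable {v w : ℝ × ℝ} {K₁ K₂ : Set (ℝ × ℝ)} {z u : ℝ → ℝ × ℝ} {s : ℝ → ℝ}

lemma det2_smul_add_smul_z (hdet : det2 v w = 1) (hz : ∀ l : ℝ, z l = (1 - l) • w - l • v)
    (a b l : ℝ) : det2 (a • v + b • w) (z l) = a * (1 - l) + b * l := by
  rw [hz, show (1 - l) • w - l • v = (-l) • v + (1 - l) • w by module, det2_smul_add_smul, hdet]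
  ring

lemma det2_smul_add_smul_u (hdet : det2 v w = 1) (hu : ∀ θ : ℝ, u θ = (1 - θ) • w + θ • v)
    (a b θ : ℝ) : det2 (a • v + b • w) (u θ) = a * (1 - θ) - b * θ := by
  rw [hu, show (1 - θ) • w + θ • v = θ • v + (1 - θ) • w by module, det2_smul_add_smul, hdet]
  ring

lemma z_eq_smul_add_smul (hz : ∀ l : ℝ, z l = (1 - l) • w - l • v) (l : ℝ) :
    z l = (-l) • v + (1 - l) • w := by
  rw [hz]
  module

lemma abs_det2_z_le_one (hdet : det2 v w = 1) (hz : ∀ l : ℝ, z l = (1 - l) • w - l • v)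
    (hK₁sub : K₁ ⊆ convexHull ℝ {0, v, w, v + w}) {l : ℝ} (hl : l ∈ Icc (0 : ℝ) 1)
    {x : ℝ × ℝ} (hx : x ∈ K₁) : |det2 x (z l)| ≤ 1 := by
  obtain ⟨a, ⟨ha0, ha1⟩, b, ⟨hb0, hb1⟩, rfl⟩ :=
    exists_eq_smul_add_smul_of_mem_convexHull (hK₁sub hx)
  obtain ⟨hl0, hl1⟩ := hl
  rw [det2_smul_add_smul_z hdet hz, abs_le]
  constructor <;> nlinarith

lemma abs_det2_z_le_s (hdet : det2 v w = 1) (hz : ∀ l : ℝ, z l = (1 - l) • w - l • v)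
    (hK₁sub : K₁ ⊆ convexHull ℝ {0, v, w, v + w})
    (hs : ∀ l : ℝ, s l = sSup ((fun x => |det2 x (z l)|) '' K₁)) {l : ℝ} (hl : l ∈ Icc (0 : ℝ) 1)
    {x : ℝ × ℝ} (hx : x ∈ K₁) : |det2 x (z l)| ≤ s l :=
  hs l ▸ le_csSup ⟨1, forall_mem_image.2 fun _ hy => abs_det2_z_le_one hdet hz hK₁sub hl hy⟩
    (mem_image_of_mem _ hx)

lemma s_le_one (hdet : det2 v w = 1) (hz : ∀ l : ℝ, z l = (1 - l) • w - l • v)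
    (hK₁sub : K₁ ⊆ convexHull ℝ {0, v, w, v + w}) (hK₁ : K₁.Nonempty)
    (hs : ∀ l : ℝ, s l = sSup ((fun x => |det2 x (z l)|) '' K₁)) {l : ℝ} (hl : l ∈ Icc (0 : ℝ) 1) :
    s l ≤ 1 :=
  hs l ▸ csSup_le (hK₁.image _)
    (forall_mem_image.2 fun _ hx => abs_det2_z_le_one hdet hz hK₁sub hl hx)

lemma one_sub_le_s_and_le_s (hdet : det2 v w = 1) (hz : ∀ l : ℝ, z l = (1 - l) • w - l • v)
    (hK₁sub : K₁ ⊆ convexHull ℝ {0, v, w, v + w}) (hvK : v ∈ K₁) (hwK : w ∈ K₁)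
    (hs : ∀ l : ℝ, s l = sSup ((fun x => |det2 x (z l)|) '' K₁)) {l : ℝ} (hl : l ∈ Icc (0 : ℝ) 1) :
    1 - l ≤ s l ∧ l ≤ s l := by
  have hv : det2 v (z l) = 1 - l := by simpa using det2_smul_add_smul_z hdet hz 1 0 l
  have hw : det2 w (z l) = l := by simpa using det2_smul_add_smul_z hdet hz 0 1 l
  constructor
  · calc 1 - l = det2 v (z l) := hv.symm
      _ ≤ s l := (le_abs_self _).trans (abs_det2_z_le_s hdet hz hK₁sub hs hl hvK)
  · calc l = det2 w (z l) := hw.symm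
      _ ≤ s l := (le_abs_self _).trans (abs_det2_z_le_s hdet hz hK₁sub hs hl hwK)

lemma abs_det2_le_s_of_mem_K₂ (hdet : det2 v w = 1) (hz : ∀ l : ℝ, z l = (1 - l) • w - l • v)
    (hK₁sub : K₁ ⊆ convexHull ℝ {0, v, w, v + w}) (hvK : v ∈ K₁) (hwK : w ∈ K₁)
    (hs : ∀ l : ℝ, s l = sSup ((fun x => |det2 x (z l)|) '' K₁))
    (hK₂ : K₂ = {p | ∃ l ∈ Set.Icc (0 : ℝ) 1, ∃ α : ℝ, 0 ≤ α ∧ α ≤ (s l)⁻¹ ∧ p = α • z l})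
    {l : ℝ} (hl : l ∈ Icc (0 : ℝ) 1) {y : ℝ × ℝ} (hy : y ∈ K₂) : |det2 y (z l)| ≤ s l := by
  rw [hK₂] at hy
  obtain ⟨μ, hμ, α, hα0, hα, rfl⟩ := hy
  obtain ⟨hμs, hμs'⟩ := one_sub_le_s_and_le_s hdet hz hK₁sub hvK hwK hs hμ
  obtain ⟨hls, hls'⟩ := one_sub_le_s_and_le_s hdet hz hK₁sub hvK hwK hs hl
  have hμpos : 0 < s μ := by linarith
  have hzz : det2 (z μ) (z l) = l - μ := by
    rw [z_eq_smul_add_smul hz μ, det2_smul_add_smul_z hdet hz]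
    ring
  calc |det2 (α • z μ) (z l)| = α * |l - μ| := by
        rw [det2_smul_left, hzz, abs_mul, abs_of_nonneg hα0]
    _ ≤ (s μ)⁻¹ * (s μ * s l) :=
        mul_le_mul hα (abs_sub_le_mul_of_le hl hμ hμs hμs' hls hls') (abs_nonneg _) (by positivity)
    _ = s l := inv_mul_cancel_left₀ hμpos.ne' _

lemma abs_det2_u_le_max (hdet : det2 v w = 1) (hu : ∀ θ : ℝ, u θ = (1 - θ) • w + θ • v)
    (hK₁sub : K₁ ⊆ convexHull ℝ {0, v, w, v + w}) {θ : ℝ} (hθ : θ ∈ Icc (0 : ℝ) 1)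
    {x : ℝ × ℝ} (hx : x ∈ K₁) : |det2 x (u θ)| ≤ max θ (1 - θ) := by
  obtain ⟨a, ⟨ha0, ha1⟩, b, ⟨hb0, hb1⟩, rfl⟩ :=
    exists_eq_smul_add_smul_of_mem_convexHull (hK₁sub hx)
  obtain ⟨hθ0, hθ1⟩ := hθ
  rw [det2_smul_add_smul_u hdet hu, abs_le]
  constructor
  · nlinarith [le_max_left θ (1 - θ)]
  · nlinarith [le_max_right θ (1 - θ)]

lemma bddAbove_abs_det2_u_image_K₂ (hdet : det2 v w = 1) (hz : ∀ l : ℝ, z l = (1 - l) • w - l • v)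
    (hK₁sub : K₁ ⊆ convexHull ℝ {0, v, w, v + w}) (hvK : v ∈ K₁) (hwK : w ∈ K₁)
    (hs : ∀ l : ℝ, s l = sSup ((fun x => |det2 x (z l)|) '' K₁))
    (hK₂ : K₂ = {p | ∃ l ∈ Set.Icc (0 : ℝ) 1, ∃ α : ℝ, 0 ≤ α ∧ α ≤ (s l)⁻¹ ∧ p = α • z l})
    (hu : ∀ θ : ℝ, u θ = (1 - θ) • w + θ • v) {θ : ℝ} (hθ : θ ∈ Icc (0 : ℝ) 1) :
    BddAbove ((fun y => |det2 y (u θ)|) '' K₂) := by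
  refine ⟨2, forall_mem_image.2 fun y hy => ?_⟩
  rw [hK₂] at hy
  obtain ⟨μ, hμ, α, hα0, hα, rfl⟩ := hy
  obtain ⟨hμs, hμs'⟩ := one_sub_le_s_and_le_s hdet hz hK₁sub hvK hwK hs hμ
  have hα2 : α ≤ 2 := hα.trans (inv_le_of_inv_le₀ (by norm_num) (by linarith))
  have hzu : |det2 (z μ) (u θ)| ≤ 1 := by
    obtain ⟨hμ0, hμ1⟩ := hμ
    obtain ⟨hθ0, hθ1⟩ := hθ
    rw [z_eq_smul_add_smul hz μ, det2_smul_add_smul_u hdet hu, abs_le]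
    constructor <;> nlinarith
  calc |det2 (α • z μ) (u θ)| = α * |det2 (z μ) (u θ)| := by
        rw [det2_smul_left, abs_mul, abs_of_nonneg hα0]
    _ ≤ 2 * 1 := mul_le_mul hα2 hzu (abs_nonneg _) (by norm_num)
    _ = 2 := mul_one 2

lemma z_mem_K₂ (hdet : det2 v w = 1) (hz : ∀ l : ℝ, z l = (1 - l) • w - l • v)
    (hK₁sub : K₁ ⊆ convexHull ℝ {0, v, w, v + w}) (hvK : v ∈ K₁) (hwK : w ∈ K₁)
    (hs : ∀ l : ℝ, s l = sSup ((fun x => |det2 x (z l)|) '' K₁))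
    (hK₂ : K₂ = {p | ∃ l ∈ Set.Icc (0 : ℝ) 1, ∃ α : ℝ, 0 ≤ α ∧ α ≤ (s l)⁻¹ ∧ p = α • z l})
    {l : ℝ} (hl : l ∈ Icc (0 : ℝ) 1) : z l ∈ K₂ := by
  obtain ⟨hls, hls'⟩ := one_sub_le_s_and_le_s hdet hz hK₁sub hvK hwK hs hl
  have hone : 1 ≤ (s l)⁻¹ :=
    (one_le_inv₀ (by linarith)).2 (s_le_one hdet hz hK₁sub ⟨v, hvK⟩ hs hl)
  rw [hK₂]
  exact ⟨l, hl, 1, zero_le_one, hone, (one_smul ℝ _).symm⟩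

lemma max_le_sSup_K₂ (hdet : det2 v w = 1) (hz : ∀ l : ℝ, z l = (1 - l) • w - l • v)
    (hK₁sub : K₁ ⊆ convexHull ℝ {0, v, w, v + w}) (hvK : v ∈ K₁) (hwK : w ∈ K₁)
    (hs : ∀ l : ℝ, s l = sSup ((fun x => |det2 x (z l)|) '' K₁))
    (hK₂ : K₂ = {p | ∃ l ∈ Set.Icc (0 : ℝ) 1, ∃ α : ℝ, 0 ≤ α ∧ α ≤ (s l)⁻¹ ∧ p = α • z l})
    (hu : ∀ θ : ℝ, u θ = (1 - θ) • w + θ • v) {θ : ℝ} (hθ : θ ∈ Icc (0 : ℝ) 1) :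
    max θ (1 - θ) ≤ sSup ((fun y => |det2 y (u θ)|) '' K₂) := by
  have hbdd := bddAbove_abs_det2_u_image_K₂ hdet hz hK₁sub hvK hwK hs hK₂ hu hθ
  have hle : ∀ l ∈ Icc (0 : ℝ) 1, |det2 (z l) (u θ)| ≤ sSup ((fun y => |det2 y (u θ)|) '' K₂) :=
    fun l hl => le_csSup hbdd (mem_image_of_mem _ (z_mem_K₂ hdet hz hK₁sub hvK hwK hs hK₂ hl))
  refine max_le ?_ ?_
  · calc θ = |det2 (z 0) (u θ)| := by
          rw [z_eq_smul_add_smul hz, det2_smul_add_smul_u hdet hu]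
          simp [abs_of_nonneg hθ.1]
      _ ≤ _ := hle 0 (left_mem_Icc.2 zero_le_one)
  · calc 1 - θ = |det2 (z 1) (u θ)| := by
          rw [z_eq_smul_add_smul hz, det2_smul_add_smul_u hdet hu]
          simp [abs_sub_comm θ, abs_of_nonneg (sub_nonneg.2 hθ.2)]
      _ ≤ _ := hle 1 (right_mem_Icc.2 zero_le_one)

end RadonBody

theorem stmt_10_general (v w : ℝ × ℝ)
    (hdet : det2 v w = 1)
    (K₁ : Set (ℝ × ℝ))
    (hvK : v ∈ K₁) (hwK : w ∈ K₁)
    (hK₁sub : K₁ ⊆ convexHull ℝ {0, v, w, v + w})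
    (z : ℝ → ℝ × ℝ) (hz : ∀ l : ℝ, z l = (1 - l) • w - l • v)
    (s : ℝ → ℝ) (hs : ∀ l : ℝ, s l = sSup ((fun x => |det2 x (z l)|) '' K₁))
    (K₂ : Set (ℝ × ℝ))
    (hK₂ : K₂ = {p | ∃ l ∈ Set.Icc (0 : ℝ) 1, ∃ α : ℝ,
      0 ≤ α ∧ α ≤ (s l)⁻¹ ∧ p = α • z l})
    (K : Set (ℝ × ℝ)) (hK : K = K₁ ∪ K₂ ∪ (-K₁) ∪ (-K₂))
    (u : ℝ → ℝ × ℝ) (hu : ∀ θ : ℝ, u θ = (1 - θ) • w + θ • v) :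
    (∀ l ∈ Set.Icc (0 : ℝ) 1,
      sSup ((fun x => |det2 x (z l)|) '' K) = s l) ∧
    (∀ θ ∈ Set.Icc (0 : ℝ) 1,
      sSup ((fun y => |det2 y (u θ)|) '' K) =
        sSup ((fun y => |det2 y (u θ)|) '' K₂)) := by
  subst hK
  refine ⟨fun l hl => ?_, fun θ hθ => ?_⟩
  · rw [hs l]
    refine csSup_image_eq_of_subset (fun x hx => Or.inl (Or.inl (Or.inl hx))) ⟨v, hvK⟩ ?_
    rw [← hs l]
    exact abs_det2_le_of_mem_union_neg (fun x => abs_det2_z_le_s hdet hz hK₁sub hs hl)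
      (fun y => abs_det2_le_s_of_mem_K₂ hdet hz hK₁sub hvK hwK hs hK₂ hl)
  · have hw : w ∈ K₂ := by
      simpa [hz] using z_mem_K₂ hdet hz hK₁sub hvK hwK hs hK₂ (left_mem_Icc.2 zero_le_one)
    refine csSup_image_eq_of_subset (fun x hx => Or.inl (Or.inl (Or.inr hx))) ⟨w, hw⟩ ?_
    have hbdd := bddAbove_abs_det2_u_image_K₂ hdet hz hK₁sub hvK hwK hs hK₂ hu hθ
    exact abs_det2_le_of_mem_union_neg
      (fun x hx => (abs_det2_u_le_max hdet hu hK₁sub hθ hx).trans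
        (max_le_sSup_K₂ hdet hz hK₁sub hvK hwK hs hK₂ hu hθ))
      (fun y hy => le_csSup hbdd (mem_image_of_mem _ hy))

/-- Suprema of the determinant form over the Radon body `K` in second-quadrant
directions are attained on `K₁`, and in first-quadrant directions on `K₂`. -/
theorem stmt_10 (v w : ℝ × ℝ) (hind : LinearIndependent ℝ ![v, w])
    (hdet : det2 v w = 1)
    (K₁ : Set (ℝ × ℝ)) (hK₁c : IsCompact K₁) (hK₁conv : Convex ℝ K₁)
    (h0 : (0 : ℝ × ℝ) ∈ K₁) (hvK : v ∈ K₁) (hwK : w ∈ K₁)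
    (hK₁sub : K₁ ⊆ convexHull ℝ {0, v, w, v + w})
    (z : ℝ → ℝ × ℝ) (hz : ∀ l : ℝ, z l = (1 - l) • w - l • v)
    (s : ℝ → ℝ) (hs : ∀ l : ℝ, s l = sSup ((fun x => |det2 x (z l)|) '' K₁))
    (K₂ : Set (ℝ × ℝ))
    (hK₂ : K₂ = {p | ∃ l ∈ Set.Icc (0 : ℝ) 1, ∃ α : ℝ,
      0 ≤ α ∧ α ≤ (s l)⁻¹ ∧ p = α • z l})
    (K : Set (ℝ × ℝ)) (hK : K = K₁ ∪ K₂ ∪ (-K₁) ∪ (-K₂))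
    (u : ℝ → ℝ × ℝ) (hu : ∀ θ : ℝ, u θ = (1 - θ) • w + θ • v) :
    (∀ l ∈ Set.Icc (0 : ℝ) 1,
      sSup ((fun x => |det2 x (z l)|) '' K) = s l) ∧
    (∀ θ ∈ Set.Icc (0 : ℝ) 1,
      sSup ((fun y => |det2 y (u θ)|) '' K) =
        sSup ((fun y => |det2 y (u θ)|) '' K₂)) :=
  stmt_10_general v w hdet K₁ hvK hwK hK₁sub z hz s hs K₂ hK₂ K hK u hu
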